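/- arXiv:2111.14134 — 2 statements merged into one kernel-verified Lean document; each statement's English description precedes it below -/
import Mathlib

section
/- The function q(x,t) = -2/sin(8t + 2x) satisfies the nonlocal focusing mKdV equation q_t(x,t) + 6 q(-x,-t) q(x,t) q_x(x,t) + q_{xxx}(x,t) = 0 at every point where sin(8t+2x) ≠ 0. -/
open Real

lemma inner_deriv (a b y : ℝ) : HasDerivAt (fun y : ℝ => a + b * y) b y := by
  have := ((hasDerivAt_id' y).const_mul b).const_add a; rwa [mul_one] at this

lemma sin_deriv (a b y : ℝ) :
    HasDerivAt (fun y : ℝ => Real.sin (a + b * y)) (Real.cos (a + b * y) * b) y :=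
  (Real.hasDerivAt_sin _).comp y (inner_deriv a b y)

lemma cos_deriv (a b y : ℝ) :
    HasDerivAt (fun y : ℝ => Real.cos (a + b * y)) (-Real.sin (a + b * y) * b) y :=
  (Real.hasDerivAt_cos _).comp y (inner_deriv a b y)

lemma d0 (a b y : ℝ) (hy : Real.sin (a + b * y) ≠ 0) :
    HasDerivAt (fun y : ℝ => -2 / Real.sin (a + b * y))
      (2 * b * Real.cos (a + b * y) / (Real.sin (a + b * y)) ^ 2) y := by
  have := (hasDerivAt_const y (-2 : ℝ)).fun_div (sin_deriv a b y) hy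
  refine this.congr_deriv (Eq.symm ?_)
  field_simp
  ring

lemma d1 (a b y : ℝ) (hy : Real.sin (a + b * y) ≠ 0) :
    HasDerivAt (fun y : ℝ => 2 * b * Real.cos (a + b * y) / (Real.sin (a + b * y)) ^ 2)
      ((-2 * b ^ 2 - 2 * b ^ 2 * Real.cos (a + b * y) ^ 2) / (Real.sin (a + b * y)) ^ 3) y := by
  have hnum : HasDerivAt (fun y : ℝ => 2 * b * Real.cos (a + b * y))
      (2 * b * (-Real.sin (a + b * y) * b)) y := (cos_deriv a b y).const_mul _
  have hden : HasDerivAt (fun y : ℝ => (Real.sin (a + b * y)) ^ 2)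
      (2 * Real.sin (a + b * y) * (Real.cos (a + b * y) * b)) y := by
    simpa [mul_comm, mul_assoc, mul_left_comm] using
      ((sin_deriv a b y).fun_pow 2)
  have hd2 : (Real.sin (a + b * y)) ^ 2 ≠ 0 := pow_ne_zero _ hy
  have := hnum.fun_div hden hd2
  refine this.congr_deriv (Eq.symm ?_)
  have hpy : Real.sin (a + b * y) ^ 2 + Real.cos (a + b * y) ^ 2 = 1 :=
    Real.sin_sq_add_cos_sq _
  field_simp
  linear_combination (b ^ 2) * hpy

lemma d2 (a b y : ℝ) (hy : Real.sin (a + b * y) ≠ 0) :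
    HasDerivAt (fun y : ℝ =>
        (-2 * b ^ 2 - 2 * b ^ 2 * Real.cos (a + b * y) ^ 2) / (Real.sin (a + b * y)) ^ 3)
      (12 * b ^ 3 * Real.cos (a + b * y) / (Real.sin (a + b * y)) ^ 4
        - 2 * b ^ 3 * Real.cos (a + b * y) / (Real.sin (a + b * y)) ^ 2) y := by
  have hnum : HasDerivAt (fun y : ℝ => -2 * b ^ 2 - 2 * b ^ 2 * Real.cos (a + b * y) ^ 2)
      (-(2 * b ^ 2) * (2 * Real.cos (a + b * y) * (-Real.sin (a + b * y) * b))) y := by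
    have : HasDerivAt (fun y : ℝ => Real.cos (a + b * y) ^ 2)
        (2 * Real.cos (a + b * y) * (-Real.sin (a + b * y) * b)) y := by
      simpa [mul_comm, mul_assoc, mul_left_comm] using ((cos_deriv a b y).fun_pow 2)
    have h2 := (hasDerivAt_const y (-2 * b ^ 2)).fun_sub (this.const_mul (2 * b ^ 2))
    refine h2.congr_deriv (Eq.symm ?_)
    ring
  have hden : HasDerivAt (fun y : ℝ => (Real.sin (a + b * y)) ^ 3)
      (3 * Real.sin (a + b * y) ^ 2 * (Real.cos (a + b * y) * b)) y := by
    simpa [mul_comm, mul_assoc, mul_left_comm] using ((sin_deriv a b y).fun_pow 3)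
  have hd3 : (Real.sin (a + b * y)) ^ 3 ≠ 0 := pow_ne_zero _ hy
  have := hnum.fun_div hden hd3
  refine this.congr_deriv (Eq.symm ?_)
  have hpy : Real.sin (a + b * y) ^ 2 + Real.cos (a + b * y) ^ 2 = 1 :=
    Real.sin_sq_add_cos_sq _
  field_simp
  linear_combination (-6 * b ^ 3 * Real.cos (a + b * y)) * hpy

/-- The nonlocal focusing mKdV: q_t + 6 q(-x,-t) q q_x + q_{xxx} = 0. -/
def nonlocalMKdVAt (q : ℝ → ℝ → ℝ) (x t : ℝ) : Prop :=
  deriv (fun s => q x s) t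
    + 6 * q (-x) (-t) * q x t * deriv (fun y => q y t) x
    + iteratedDeriv 3 (fun y => q y t) x = 0

/-- q(x,t) = -2 / sin(8t + 2x) solves the nonlocal focusing mKdV wherever
sin(8t + 2x) ≠ 0. -/
theorem stmt0 (x t : ℝ) (h : Real.sin (8 * t + 2 * x) ≠ 0) :
    nonlocalMKdVAt (fun x t => -2 / Real.sin (8 * t + 2 * x)) x t := by
  unfold nonlocalMKdVAt
  set s := Real.sin (8 * t + 2 * x) with hs
  set c := Real.cos (8 * t + 2 * x) with hc
  -- t-derivative: function is fun u => -2 / sin (8*u + 2*x) = -2 / sin ((2*x) + 8*u)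
  have hT : deriv (fun u : ℝ => -2 / Real.sin (8 * u + 2 * x)) t
      = 2 * 8 * c / s ^ 2 := by
    have h' : Real.sin (2 * x + 8 * t) ≠ 0 := by
      rwa [show 2 * x + 8 * t = 8 * t + 2 * x by ring]
    have := (d0 (2 * x) 8 t h').deriv
    rw [show (2 * x + 8 * t) = 8 * t + 2 * x from by ring] at this
    rw [← this]
    congr 1
    funext u
    rw [show (2 * x + 8 * u) = 8 * u + 2 * x from by ring]
  -- x-derivatives: function is fun y => -2 / sin (8*t + 2*y)
  have hne : ∀ y, Real.sin (8 * t + 2 * y) ≠ 0 → True := fun _ _ => trivial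
  have hX1 : ∀ y, Real.sin (8 * t + 2 * y) ≠ 0 →
      deriv (fun y : ℝ => -2 / Real.sin (8 * t + 2 * y)) y
        = 2 * 2 * Real.cos (8 * t + 2 * y) / (Real.sin (8 * t + 2 * y)) ^ 2 :=
    fun y hy => (d0 (8 * t) 2 y hy).deriv
  have hopen : ∀ y, Real.sin (8 * t + 2 * y) ≠ 0 →
      ∀ᶠ z in nhds y, Real.sin (8 * t + 2 * z) ≠ 0 := by
    intro y hy
    have hcont : ContinuousAt (fun z : ℝ => Real.sin (8 * t + 2 * z)) y := by fun_prop
    exact hcont.eventually_ne hy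
  have hX2 : ∀ y, Real.sin (8 * t + 2 * y) ≠ 0 →
      deriv (deriv (fun y : ℝ => -2 / Real.sin (8 * t + 2 * y))) y
        = (-2 * 2 ^ 2 - 2 * 2 ^ 2 * Real.cos (8 * t + 2 * y) ^ 2)
            / (Real.sin (8 * t + 2 * y)) ^ 3 := by
    intro y hy
    have hev : deriv (fun y : ℝ => -2 / Real.sin (8 * t + 2 * y))
        =ᶠ[nhds y] fun y => 2 * 2 * Real.cos (8 * t + 2 * y) / (Real.sin (8 * t + 2 * y)) ^ 2 :=
      (hopen y hy).mono fun z hz => hX1 z hz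
    rw [hev.deriv_eq]
    exact (d1 (8 * t) 2 y hy).deriv
  have hX3 : deriv (deriv (deriv (fun y : ℝ => -2 / Real.sin (8 * t + 2 * y)))) x
      = 12 * 2 ^ 3 * c / s ^ 4 - 2 * 2 ^ 3 * c / s ^ 2 := by
    have hev : deriv (deriv (fun y : ℝ => -2 / Real.sin (8 * t + 2 * y)))
        =ᶠ[nhds x] fun y => (-2 * 2 ^ 2 - 2 * 2 ^ 2 * Real.cos (8 * t + 2 * y) ^ 2)
            / (Real.sin (8 * t + 2 * y)) ^ 3 :=
      (hopen x h).mono fun z hz => hX2 z hz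
    rw [hev.deriv_eq]
    exact (d2 (8 * t) 2 x h).deriv
  have hiter : iteratedDeriv 3 (fun y : ℝ => -2 / Real.sin (8 * t + 2 * y)) x
      = deriv (deriv (deriv (fun y : ℝ => -2 / Real.sin (8 * t + 2 * y)))) x := by
    simp [iteratedDeriv_succ, iteratedDeriv_zero]
  have hnl : Real.sin (8 * -t + 2 * -x) = -s := by
    rw [show 8 * -t + 2 * -x = -(8 * t + 2 * x) by ring, Real.sin_neg]
  simp only [hiter, hX3, hT, hX1 x h, hnl, ← hs, ← hc]
  field_simp
  ring
end

section
/- For a Volterra integral equation φ(x) = I + ∫_{a}^{x} K(x,y) φ(y) dy on [a,b] with ‖K(x,y)‖ ≤ g(y) for an integrable g, the Neumann series converges and any two continuous solutions coincide (uniqueness via Grönwall's inequality). -/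
set_option maxHeartbeats 2000000


open Matrix MeasureTheory intervalIntegral
local notation:10000 n "!" => Nat.factorial n

attribute [local instance] Matrix.normedAddCommGroup Matrix.normedSpace

lemma aux_integral (a x c : ℝ) (n : ℕ) :
    ∫ y in a..x, c * (y - a) ^ n = c * (x - a) ^ (n + 1) / (n + 1) := by
  have h := intervalIntegral.integral_comp_sub_right (a := a) (b := x) (fun t => c * t ^ n) a
  simp only [sub_self] at h
  rw [h, intervalIntegral.integral_const_mul, integral_pow]
  simp
  ring

lemma aux_fact (C M1 xa : ℝ) (n : ℕ) :
    C * M1 * C ^ n / n ! * xa ^ (n + 1) / (n + 1) = M1 * (C * xa) ^ (n + 1) / (n + 1)! := by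
  rw [Nat.factorial_succ, mul_pow]
  have h1 : (n ! : ℝ) ≠ 0 := Nat.cast_ne_zero.2 n.factorial_ne_zero
  have h2 : ((n : ℝ) + 1) ≠ 0 := by positivity
  push_cast
  field_simp
  ring

lemma aux_mul_norm (A B : Matrix (Fin 2) (Fin 2) ℂ) : ‖A * B‖ ≤ 2 * ‖A‖ * ‖B‖ := by
  rw [show (2:ℝ) * ‖A‖ * ‖B‖ = 2 * (‖A‖ * ‖B‖) by ring]
  refine (Matrix.norm_le_iff (by positivity)).2 fun i j => ?_
  rw [Matrix.mul_apply, Fin.sum_univ_two]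
  calc ‖A i 0 * B 0 j + A i 1 * B 1 j‖ ≤ ‖A i 0 * B 0 j‖ + ‖A i 1 * B 1 j‖ := norm_add_le _ _
    _ ≤ ‖A‖ * ‖B‖ + ‖A‖ * ‖B‖ := by
        gcongr <;>
          exact (norm_mul_le _ _).trans
            (mul_le_mul (Matrix.norm_entry_le_entrywise_sup_norm A)
              (Matrix.norm_entry_le_entrywise_sup_norm B) (norm_nonneg _) (norm_nonneg _))
    _ = 2 * (‖A‖ * ‖B‖) := by ring

/-- For the Volterra equation φ(x) = I + ∫_a^x K(x,y) φ(y) dy on [a,b], with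
K continuous on the triangle {a ≤ y ≤ x ≤ b} and ‖K(x,y)‖ ≤ g(y) for an
integrable g, a continuous solution exists (Neumann series) and any two
continuous solutions coincide on [a,b] (Grönwall). -/
theorem stmt17 (a b : ℝ) (hab : a ≤ b)
    (K : ℝ → ℝ → Matrix (Fin 2) (Fin 2) ℂ) (g : ℝ → ℝ)
    (hK : ContinuousOn (fun p : ℝ × ℝ => K p.1 p.2)
      {p : ℝ × ℝ | a ≤ p.2 ∧ p.2 ≤ p.1 ∧ p.1 ≤ b})
    (hKg : ∀ x y, a ≤ y → y ≤ x → x ≤ b → ‖K x y‖ ≤ g y)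
    (hg : IntegrableOn g (Set.Icc a b)) :
    (∃ φ : ℝ → Matrix (Fin 2) (Fin 2) ℂ,
      ContinuousOn φ (Set.Icc a b) ∧
      ∀ x ∈ Set.Icc a b, φ x = 1 + ∫ y in a..x, K x y * φ y) ∧
    (∀ φ ψ : ℝ → Matrix (Fin 2) (Fin 2) ℂ,
      ContinuousOn φ (Set.Icc a b) → ContinuousOn ψ (Set.Icc a b) →
      (∀ x ∈ Set.Icc a b, φ x = 1 + ∫ y in a..x, K x y * φ y) →
      (∀ x ∈ Set.Icc a b, ψ x = 1 + ∫ y in a..x, K x y * ψ y) →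
      Set.EqOn φ ψ (Set.Icc a b)) := by
  classical
  have hmulcont : Continuous fun p : (Matrix (Fin 2) (Fin 2) ℂ) × (Matrix (Fin 2) (Fin 2) ℂ) =>
      p.1 * p.2 := continuous_fst.matrix_mul continuous_snd
  set S : Set (ℝ × ℝ) := {p : ℝ × ℝ | a ≤ p.2 ∧ p.2 ≤ p.1 ∧ p.1 ≤ b} with hSdef
  have hSclosed : IsClosed S := by
    have h1 : IsClosed {p : ℝ × ℝ | a ≤ p.2} := isClosed_le continuous_const continuous_snd
    have h2 : IsClosed {p : ℝ × ℝ | p.2 ≤ p.1} := isClosed_le continuous_snd continuous_fst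
    have h3 : IsClosed {p : ℝ × ℝ | p.1 ≤ b} := isClosed_le continuous_fst continuous_const
    have hS : S = {p : ℝ × ℝ | a ≤ p.2} ∩ ({p : ℝ × ℝ | p.2 ≤ p.1} ∩ {p : ℝ × ℝ | p.1 ≤ b}) := by
      ext p; simp [hSdef, Set.mem_setOf_eq, and_assoc]
    rw [hS]; exact h1.inter (h2.inter h3)
  -- Tietze extension of K to all of ℝ × ℝ
  obtain ⟨K', hK'⟩ : ∃ K' : C(ℝ × ℝ, Matrix (Fin 2) (Fin 2) ℂ),
      ∀ p : ℝ × ℝ, p ∈ S → K' p = K p.1 p.2 := by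
    obtain ⟨g', hg'⟩ := ContinuousMap.exists_restrict_eq hSclosed
      ⟨S.restrict (fun p => K p.1 p.2), hK.restrict⟩
    refine ⟨g', fun p hp => ?_⟩
    have := DFunLike.congr_fun hg' ⟨p, hp⟩
    exact this
  -- bound for the extended kernel on the box
  obtain ⟨C0, hC0⟩ := (isCompact_Icc (a := ((a, a) : ℝ × ℝ)) (b := (b, b))).exists_bound_of_continuousOn
    K'.continuous.continuousOn
  set C : ℝ := 2 * max C0 0 with hCdef
  have hCnn : (0:ℝ) ≤ C := by positivity
  have hCb : ∀ x y : ℝ, x ∈ Set.Icc a b → y ∈ Set.Icc a b →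
      ∀ v : Matrix (Fin 2) (Fin 2) ℂ, ‖K' (x, y) * v‖ ≤ C * ‖v‖ := by
    intro x y hx hy v
    have hmem : ((x, y) : ℝ × ℝ) ∈ Set.Icc ((a, a) : ℝ × ℝ) (b, b) := by
      simp [Prod.le_def, hx.1, hx.2, hy.1, hy.2]
    calc ‖K' (x, y) * v‖ ≤ 2 * ‖K' (x, y)‖ * ‖v‖ := aux_mul_norm _ _
      _ ≤ 2 * max C0 0 * ‖v‖ := by
          gcongr
          exact (hC0 _ hmem).trans (le_max_left _ _)
      _ = C * ‖v‖ := by rw [hCdef]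
  -- replacing K by K' inside the integrals
  have hKK' : ∀ z ∈ Set.Icc a b, ∀ f : ℝ → Matrix (Fin 2) (Fin 2) ℂ,
      (∫ y in a..z, K z y * f y) = ∫ y in a..z, K' (z, y) * f y := by
    intro z hz f
    apply intervalIntegral.integral_congr
    rw [Set.uIcc_of_le hz.1]
    intro y hy
    show K z y * f y = K' (z, y) * f y
    rw [hK' (z, y) ⟨hy.1, hy.2, hz.2⟩]
  constructor
  · -- EXISTENCE via Picard iteration
    set T : (ℝ → Matrix (Fin 2) (Fin 2) ℂ) → (ℝ → Matrix (Fin 2) (Fin 2) ℂ) :=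
      fun f x => 1 + ∫ y in a..x, K' (x, y) * f y with hTdef
    set Φ : ℕ → ℝ → Matrix (Fin 2) (Fin 2) ℂ := fun n => T^[n] (fun _ => 1) with hΦdef
    have hΦsucc : ∀ n x, Φ (n + 1) x = 1 + ∫ y in a..x, K' (x, y) * Φ n y := by
      intro n x
      simp only [hΦdef, Function.iterate_succ_apply']
      rfl
    have hΦcont : ∀ n, Continuous (Φ n) := by
      intro n
      induction n with
      | zero => exact continuous_const
      | succ n ih =>
        have h1 : Continuous fun x => ∫ y in a..x, K' (x, y) * Φ n y :=
          intervalIntegral.continuous_parametric_intervalIntegral_of_continuous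
            (f := fun x y => K' (x, y) * Φ n y)
            (K'.continuous.matrix_mul (ih.comp continuous_snd)) continuous_id
        have : Φ (n + 1) = fun x => 1 + ∫ y in a..x, K' (x, y) * Φ n y := funext (hΦsucc n)
        rw [this]
        exact continuous_const.add h1
    set M1 : ℝ := C * (b - a) * ‖(1 : Matrix (Fin 2) (Fin 2) ℂ)‖ with hM1def
    have hM1nn : 0 ≤ M1 := by
      apply mul_nonneg (mul_nonneg hCnn (sub_nonneg.2 hab)) (norm_nonneg _)
    have hstep : ∀ n, ∀ x ∈ Set.Icc a b, ‖Φ (n + 1) x - Φ n x‖ ≤ M1 * (C * (x - a)) ^ n / n ! := by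
      intro n
      induction n with
      | zero =>
        intro x hx
        have h0 : Φ 1 x - Φ 0 x = ∫ y in a..x, K' (x, y) * 1 := by
          rw [hΦsucc 0 x]
          simp [hΦdef]
        rw [h0]
        have hb' : ‖∫ y in a..x, K' (x, y) * 1‖ ≤
            (C * ‖(1 : Matrix (Fin 2) (Fin 2) ℂ)‖) * |x - a| := by
          apply intervalIntegral.norm_integral_le_of_norm_le_const
          intro y hy
          rw [Set.uIoc_of_le hx.1] at hy
          exact hCb x y hx ⟨hy.1.le, hy.2.trans hx.2⟩ 1
        refine hb'.trans ?_
        rw [abs_of_nonneg (sub_nonneg.2 hx.1)]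
        calc C * ‖(1 : Matrix (Fin 2) (Fin 2) ℂ)‖ * (x - a)
            ≤ C * ‖(1 : Matrix (Fin 2) (Fin 2) ℂ)‖ * (b - a) :=
              mul_le_mul_of_nonneg_left (by linarith [hx.2]) (mul_nonneg hCnn (norm_nonneg _))
          _ = M1 * (C * (x - a)) ^ 0 / 0! := by simp [hM1def]
      | succ n ih =>
        intro x hx
        have hxa : a ≤ x := hx.1
        have hcont1 : Continuous fun y => K' (x, y) * Φ (n + 1) y :=
          (K'.continuous.comp (Continuous.prodMk_right x)).matrix_mul (hΦcont (n + 1))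
        have hcont2 : Continuous fun y => K' (x, y) * Φ n y :=
          (K'.continuous.comp (Continuous.prodMk_right x)).matrix_mul (hΦcont n)
        have hdiff : Φ (n + 2) x - Φ (n + 1) x =
            ∫ y in a..x, K' (x, y) * (Φ (n + 1) y - Φ n y) := by
          rw [hΦsucc (n + 1) x, hΦsucc n x, add_sub_add_left_eq_sub,
            ← intervalIntegral.integral_sub (hcont1.intervalIntegrable _ _) (hcont2.intervalIntegrable _ _)]
          congr 1
          funext y
          rw [mul_sub]
        rw [hdiff]
        have hint1 : IntervalIntegrable (fun y => ‖K' (x, y) * (Φ (n + 1) y - Φ n y)‖) volume a x :=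
          ((K'.continuous.comp (Continuous.prodMk_right x)).matrix_mul
            ((hΦcont (n + 1)).sub (hΦcont n))).norm.intervalIntegrable _ _
        have hint2 : IntervalIntegrable (fun y => (C * M1 * C ^ n / n !) * (y - a) ^ n) volume a x := by
          apply Continuous.intervalIntegrable
          fun_prop
        calc ‖∫ y in a..x, K' (x, y) * (Φ (n + 1) y - Φ n y)‖
            ≤ ∫ y in a..x, ‖K' (x, y) * (Φ (n + 1) y - Φ n y)‖ :=
              intervalIntegral.norm_integral_le_integral_norm hxa
          _ ≤ ∫ y in a..x, (C * M1 * C ^ n / n !) * (y - a) ^ n := by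
              apply intervalIntegral.integral_mono_on hxa hint1 hint2
              intro y hy
              have hy' : y ∈ Set.Icc a b := ⟨hy.1, hy.2.trans hx.2⟩
              calc ‖K' (x, y) * (Φ (n + 1) y - Φ n y)‖
                  ≤ C * ‖Φ (n + 1) y - Φ n y‖ := hCb x y hx hy' _
                _ ≤ C * (M1 * (C * (y - a)) ^ n / n !) := by
                    gcongr
                    exact ih y hy'
                _ = (C * M1 * C ^ n / n !) * (y - a) ^ n := by rw [mul_pow]; ring
          _ = (C * M1 * C ^ n / n !) * (x - a) ^ (n + 1) / (n + 1) := aux_integral a x _ n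
          _ = M1 * (C * (x - a)) ^ (n + 1) / (n + 1)! := aux_fact C M1 (x - a) n
    -- summable bound and uniform Cauchy
    set d : ℕ → ℝ := fun n => M1 * (C * (b - a)) ^ n / n ! with hddef
    have hCba : 0 ≤ C * (b - a) := mul_nonneg hCnn (sub_nonneg.2 hab)
    have hdnn : ∀ n, 0 ≤ d n := fun n =>
      div_nonneg (mul_nonneg hM1nn (pow_nonneg hCba n)) (by positivity)
    have hd : ∀ n, ∀ x ∈ Set.Icc a b, dist (Φ n x) (Φ (n + 1) x) ≤ d n := by
      intro n x hx
      rw [dist_eq_norm, norm_sub_rev]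
      refine (hstep n x hx).trans ?_
      have hxa : 0 ≤ C * (x - a) := mul_nonneg hCnn (sub_nonneg.2 hx.1)
      have h1 : (C * (x - a)) ^ n ≤ (C * (b - a)) ^ n :=
        pow_le_pow_left₀ hxa (mul_le_mul_of_nonneg_left (by linarith [hx.2]) hCnn) n
      have hfac : (0:ℝ) < n ! := by positivity
      exact (div_le_div_iff_of_pos_right hfac).2 (mul_le_mul_of_nonneg_left h1 hM1nn)
    have hdsum : Summable d := by
      have := (Real.summable_pow_div_factorial (C * (b - a))).mul_left M1
      simpa [hddef, mul_div_assoc] using this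
    have hcauchy : ∀ x ∈ Set.Icc a b, ∃ L, Filter.Tendsto (fun n => Φ n x) Filter.atTop (nhds L) := by
      intro x hx
      exact cauchySeq_tendsto_of_complete
        (cauchySeq_of_dist_le_of_summable d (fun n => hd n x hx) hdsum)
    set φ : ℝ → Matrix (Fin 2) (Fin 2) ℂ := fun x =>
      if h : ∃ L, Filter.Tendsto (fun n => Φ n x) Filter.atTop (nhds L) then h.choose else 1
      with hφdef
    have hφlim : ∀ x ∈ Set.Icc a b, Filter.Tendsto (fun n => Φ n x) Filter.atTop (nhds (φ x)) := by
      intro x hx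
      have h := hcauchy x hx
      simp only [hφdef, dif_pos h]
      exact h.choose_spec
    set r : ℕ → ℝ := fun n => ∑' k, d (k + n) with hrdef
    have hr0 : Filter.Tendsto r Filter.atTop (nhds 0) := tendsto_sum_nat_add d
    have hrbound : ∀ n, ∀ x ∈ Set.Icc a b, dist (Φ n x) (φ x) ≤ r n := by
      intro n x hx
      have h := dist_le_tsum_of_dist_le_of_tendsto d (fun m => hd m x hx) hdsum (hφlim x hx) n
      refine h.trans (le_of_eq ?_)
      rw [hrdef]
      exact tsum_congr fun k => by rw [add_comm]
    have hrnn : ∀ n, 0 ≤ r n := fun n => tsum_nonneg fun k => hdnn _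
    have hunif : TendstoUniformlyOn Φ φ Filter.atTop (Set.Icc a b) := by
      refine Metric.tendstoUniformlyOn_iff.2 ?_
      intro ε hε
      filter_upwards [hr0.eventually (gt_mem_nhds hε)] with n hn x hx
      exact lt_of_le_of_lt (by rw [dist_comm]; exact hrbound n x hx) hn
    have hφcont : ContinuousOn φ (Set.Icc a b) :=
      hunif.continuousOn (Filter.Eventually.of_forall fun n => (hΦcont n).continuousOn).frequently
    refine ⟨φ, hφcont, fun x hx => ?_⟩
    have h1 : Filter.Tendsto (fun n => Φ (n + 1) x) Filter.atTop (nhds (φ x)) :=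
      (hφlim x hx).comp (Filter.tendsto_add_atTop_nat 1)
    have h2 : Filter.Tendsto (fun n => (1 : Matrix (Fin 2) (Fin 2) ℂ) +
        ∫ y in a..x, K' (x, y) * Φ n y) Filter.atTop
        (nhds (1 + ∫ y in a..x, K' (x, y) * φ y)) := by
      refine Filter.Tendsto.const_add _ ?_
      refine tendsto_iff_norm_sub_tendsto_zero.2 ?_
      have hbnd : ∀ n : ℕ, ‖(∫ y in a..x, K' (x, y) * Φ n y) - ∫ y in a..x, K' (x, y) * φ y‖ ≤
          C * (b - a) * r n := by
        intro n
        have hintn :=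
          Continuous.intervalIntegrable (μ := volume) (u := fun y => K' (x, y) * Φ n y)
            ((K'.continuous.comp (Continuous.prodMk_right x)).matrix_mul (hΦcont n)) a x
        have hintφ := ContinuousOn.intervalIntegrable (μ := volume) (u := fun y => K' (x, y) * φ y) (a := a) (b := x) (by
          rw [Set.uIcc_of_le hx.1]
          exact hmulcont.comp_continuousOn
            (((K'.continuous.comp (Continuous.prodMk_right x)).continuousOn).prodMk
              (hφcont.mono (Set.Icc_subset_Icc_right hx.2))))
        rw [← intervalIntegral.integral_sub hintn hintφ]
        have hb' : ‖∫ y in a..x, (K' (x, y) * Φ n y - K' (x, y) * φ y)‖ ≤ (C * r n) * |x - a| := by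
          apply intervalIntegral.norm_integral_le_of_norm_le_const
          intro y hy
          rw [Set.uIoc_of_le hx.1] at hy
          have hy' : y ∈ Set.Icc a b := ⟨hy.1.le, hy.2.trans hx.2⟩
          rw [← mul_sub]
          calc ‖K' (x, y) * (Φ n y - φ y)‖ ≤ C * ‖Φ n y - φ y‖ := hCb x y hx hy' _
            _ ≤ C * r n := by
                gcongr
                rw [← dist_eq_norm]
                exact hrbound n y hy'
        refine hb'.trans ?_
        rw [abs_of_nonneg (sub_nonneg.2 hx.1)]
        calc (C * r n) * (x - a) ≤ (C * r n) * (b - a) := by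
              gcongr
              exact hx.2
          _ = C * (b - a) * r n := by ring
      apply squeeze_zero (fun n => norm_nonneg _) hbnd
      simpa using hr0.const_mul (C * (b - a))
    have h2' : Filter.Tendsto (fun n => Φ (n + 1) x) Filter.atTop
        (nhds (1 + ∫ y in a..x, K' (x, y) * φ y)) :=
      (Filter.tendsto_congr fun n => hΦsucc n x).mpr h2
    have heq : φ x = 1 + ∫ y in a..x, K' (x, y) * φ y := tendsto_nhds_unique h1 h2'
    rw [heq, hKK' x hx φ]
  · -- UNIQUENESS via iterated Grönwall bound
    intro φ ψ hφc hψc hφ hψ x hx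
    have hsub : ∀ z ∈ Set.Icc a b, φ z - ψ z = ∫ y in a..z, K' (z, y) * (φ y - ψ y) := by
      intro z hz
      have hKcont : ContinuousOn (fun y => K' (z, y)) (Set.Icc a z) :=
        (K'.continuous.comp (Continuous.prodMk_right z)).continuousOn
      have hsubset : Set.Icc a z ⊆ Set.Icc a b := Set.Icc_subset_Icc_right hz.2
      have hint1 := ContinuousOn.intervalIntegrable (μ := volume) (u := fun y => K' (z, y) * φ y) (a := a) (b := z) (by
        rw [Set.uIcc_of_le hz.1]
        exact hmulcont.comp_continuousOn (hKcont.prodMk (hφc.mono hsubset)))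
      have hint2 := ContinuousOn.intervalIntegrable (μ := volume) (u := fun y => K' (z, y) * ψ y) (a := a) (b := z) (by
        rw [Set.uIcc_of_le hz.1]
        exact hmulcont.comp_continuousOn (hKcont.prodMk (hψc.mono hsubset)))
      rw [hφ z hz, hψ z hz, hKK' z hz φ, hKK' z hz ψ, add_sub_add_left_eq_sub,
        ← intervalIntegral.integral_sub hint1 hint2]
      congr 1
      funext y
      rw [mul_sub]
    obtain ⟨M0, hM0⟩ := (isCompact_Icc (a := a) (b := b)).exists_bound_of_continuousOn
      (hφc.sub hψc)
    set M1 : ℝ := max M0 0 with hM1def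
    have hM1nn : 0 ≤ M1 := le_max_right _ _
    have hdecay : ∀ n : ℕ, ∀ z ∈ Set.Icc a b, ‖φ z - ψ z‖ ≤ M1 * (C * (z - a)) ^ n / n ! := by
      intro n
      induction n with
      | zero =>
        intro z hz
        have he : M1 * (C * (z - a)) ^ 0 / 0! = M1 := by norm_num
        rw [he]
        exact (hM0 z hz).trans (le_max_left _ _)
      | succ n ih =>
        intro z hz
        have hza : a ≤ z := hz.1
        have hKcont : ContinuousOn (fun y => K' (z, y)) (Set.Icc a z) :=
          (K'.continuous.comp (Continuous.prodMk_right z)).continuousOn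
        have hsubset : Set.Icc a z ⊆ Set.Icc a b := Set.Icc_subset_Icc_right hz.2
        have hintcont : ContinuousOn (fun y => K' (z, y) * (φ y - ψ y)) (Set.Icc a z) :=
          hmulcont.comp_continuousOn (hKcont.prodMk ((hφc.sub hψc).mono hsubset))
        have hint1 : IntervalIntegrable (fun y => ‖K' (z, y) * (φ y - ψ y)‖) volume a z := by
          apply ContinuousOn.intervalIntegrable
          rw [Set.uIcc_of_le hza]
          exact hintcont.norm
        have hint2 : IntervalIntegrable (fun y => (C * M1 * C ^ n / n !) * (y - a) ^ n) volume a z := by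
          apply Continuous.intervalIntegrable
          fun_prop
        rw [hsub z hz]
        calc ‖∫ y in a..z, K' (z, y) * (φ y - ψ y)‖
            ≤ ∫ y in a..z, ‖K' (z, y) * (φ y - ψ y)‖ :=
              intervalIntegral.norm_integral_le_integral_norm hza
          _ ≤ ∫ y in a..z, (C * M1 * C ^ n / n !) * (y - a) ^ n := by
              apply intervalIntegral.integral_mono_on hza hint1 hint2
              intro y hy
              have hy' : y ∈ Set.Icc a b := ⟨hy.1, hy.2.trans hz.2⟩
              calc ‖K' (z, y) * (φ y - ψ y)‖ ≤ C * ‖φ y - ψ y‖ := hCb z y hz hy' _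
                _ ≤ C * (M1 * (C * (y - a)) ^ n / n !) := by
                    gcongr
                    exact ih y hy'
                _ = (C * M1 * C ^ n / n !) * (y - a) ^ n := by rw [mul_pow]; ring
          _ = (C * M1 * C ^ n / n !) * (z - a) ^ (n + 1) / (n + 1) := aux_integral a z _ n
          _ = M1 * (C * (z - a)) ^ (n + 1) / (n + 1)! := aux_fact C M1 (z - a) n
    have htend : Filter.Tendsto (fun n : ℕ => M1 * (C * (x - a)) ^ n / n !) Filter.atTop (nhds 0) := by
      have := (FloorSemiring.tendsto_pow_div_factorial_atTop (C * (x - a))).const_mul M1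
      simpa [mul_div_assoc] using this
    have hle : ‖φ x - ψ x‖ ≤ 0 :=
      ge_of_tendsto htend (Filter.Eventually.of_forall fun n => hdecay n x hx)
    have := norm_le_zero_iff.1 hle
    exact sub_eq_zero.1 this
end
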